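/- arXiv:math/0202153 — 2 statements merged into one kernel-verified Lean document; each statement's English description precedes it below -/
import Mathlib

section
/- Let τ = (1+√5)/2 and let ℤ[τ] = {p + qτ : p, q ∈ ℤ} ⊆ ℝ. If a, b ∈ ℤ[τ] satisfy a ≤ 0 and b ≤ 0 and the symmetric real matrix [[2, a, b], [a, 2, -τ], [b, -τ, 2]] has determinant 0, then a = b = 1 - τ. In other words, [[2, τ', τ'], [τ', 2, -τ], [τ', -τ, 2]] with τ' = 1 - τ is the unique affine extension of the Cartan matrix of H₂ satisfying the conditions: diagonal entries 2, symmetry, off-diagonal entries nonpositive elements of ℤ[τ], and determinant 0. -/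
noncomputable def tau : ℝ := (1 + Real.sqrt 5) / 2

/-- The ring of integers ℤ[τ] of ℚ(√5), as a subset of ℝ. -/
def Ztau : Set ℝ := {x : ℝ | ∃ p q : ℤ, x = (p : ℝ) + (q : ℝ) * tau}

/-!
Write τ = φ. The determinant vanishes iff `a² + b² + φab = 3 - φ`. For `a = p + qφ` and
`b = r + sφ` both sides lie in `ℤ + ℤφ`, so by the irrationality of `φ` the identity survives
the Galois conjugation `φ ↦ ψ = 1 - φ`. As `a, b ≤ 0`, the identity itself gives `a² < 3/2`;
as `ψ² < 2`, the conjugate form is positive definite and gives `(p + qψ)² < 8`. The two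
embeddings of `a` differ by `q√5`, which leaves `a ∈ {0, -1, 1 - φ, φ - 2}`, and likewise for
`b`; among these sixteen pairs only `(1 - φ, 1 - φ)` satisfies the identity.
-/

open Real goldenRatio

theorem tau_eq_goldenRatio : tau = φ := rfl

theorem det_extended_cartan {R : Type*} [CommRing R] (a b t : R) :
    !![2, a, b; a, 2, -t; b, -t, 2].det = 2 * (4 - t ^ 2 - (a ^ 2 + b ^ 2 + t * a * b)) := by
  rw [Matrix.det_fin_three]
  simp only [Matrix.of_apply, Matrix.cons_val', Matrix.cons_val_zero, Matrix.cons_val_one,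
    Matrix.cons_val_two, Matrix.empty_val', Matrix.cons_val_fin_one, Matrix.head_cons,
    Matrix.tail_cons, Matrix.head_fin_const]
  ring

theorem goldenRatio_mem_Ioo : φ ∈ Set.Ioo (8 / 5 : ℝ) (7 / 4) := by
  constructor <;> nlinarith [goldenRatio_sq, goldenRatio_pos]

theorem sq_le_two_mul_of_add_mul_eq {t x y c : ℝ} (ht : t ^ 2 ≤ 2)
    (h : x ^ 2 + y ^ 2 + t * x * y = c) : x ^ 2 ≤ 2 * c := by
  nlinarith [sq_nonneg (2 * y + t * x), mul_nonneg (sub_nonneg.2 ht) (sq_nonneg x)]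

theorem eq_zero_of_intCast_add_intCast_mul_goldenRatio {m n : ℤ} (h : (m : ℝ) + n * φ = 0) :
    m = 0 ∧ n = 0 := by
  have hn : n = 0 := by
    by_contra hn
    exact ((goldenRatio_irrational.intCast_mul hn).intCast_add m).ne_zero h
  subst hn
  simpa using h

theorem intCast_add_intCast_mul_goldenConj_eq {m n m' n' : ℤ}
    (h : (m : ℝ) + n * φ = m' + n' * φ) : (m : ℝ) + n * ψ = m' + n' * ψ := by
  obtain ⟨hm, hn⟩ :=
    eq_zero_of_intCast_add_intCast_mul_goldenRatio (m := m - m') (n := n - n')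
      (by push_cast; linear_combination h)
  rw [sub_eq_zero.1 hm, sub_eq_zero.1 hn]

theorem quadForm_intCast_add_intCast_mul {R : Type*} [CommRing R] {t : R} (ht : t ^ 2 = t + 1)
    (p q r s : ℤ) :
    (p + q * t) ^ 2 + (r + s * t) ^ 2 + t * (p + q * t) * (r + s * t) =
      ((p ^ 2 + q ^ 2 + r ^ 2 + s ^ 2 + p * s + q * r + q * s : ℤ) : R) +
      ((2 * p * q + q ^ 2 + 2 * r * s + s ^ 2 + p * r + p * s + q * r + 2 * q * s : ℤ) : R) *
        t := by
  push_cast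
  linear_combination (q ^ 2 + s ^ 2 + p * s + q * r + q * s + q * s * t : R) * ht

theorem quadForm_goldenConj_eq {p q r s : ℤ}
    (h : (p + q * φ) ^ 2 + (r + s * φ) ^ 2 + φ * (p + q * φ) * (r + s * φ) = 3 - φ) :
    (p + q * ψ) ^ 2 + (r + s * ψ) ^ 2 + ψ * (p + q * ψ) * (r + s * ψ) = 3 - ψ := by
  rw [quadForm_intCast_add_intCast_mul goldenRatio_sq] at h
  rw [quadForm_intCast_add_intCast_mul goldenConj_sq,
    intCast_add_intCast_mul_goldenConj_eq (m' := 3) (n' := -1) (by rw [h]; push_cast; ring)]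
  push_cast
  ring

theorem intCast_add_intCast_mul_goldenRatio_mem_of_sq_lt {p q : ℤ}
    (h₁ : ((p : ℝ) + q * φ) ^ 2 < 3 / 2) (h₂ : (p : ℝ) + q * φ ≤ 0)
    (h₃ : ((p : ℝ) + q * ψ) ^ 2 < 8) :
    (p : ℝ) + q * φ ∈ ({0, -1, 1 - φ, φ - 2} : Set ℝ) := by
  obtain ⟨hφ₁, hφ₂⟩ := goldenRatio_mem_Ioo
  have h₁' : -5 / 4 < (p : ℝ) + q * φ := by nlinarith
  -- `φ - ψ = √5`, so the two embeddings of `p + qφ` are `√5 q` apart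
  have hq : q ^ 2 < 4 := by
    have h5 : ((p : ℝ) + q * φ - (p + q * ψ)) ^ 2 = 5 * q ^ 2 := by
      rw [show (p : ℝ) + q * φ - (p + q * ψ) = q * (φ - ψ) by ring,
        goldenRatio_sub_goldenConj, mul_pow, sq_sqrt (by norm_num : (0 : ℝ) ≤ 5)]
      ring
    have : (q : ℝ) ^ 2 < 4 := by nlinarith [sq_nonneg ((p : ℝ) + q * φ + (p + q * ψ))]
    exact_mod_cast this
  obtain ⟨hq₁, hq₂⟩ : -1 ≤ q ∧ q ≤ 1 := by constructor <;> nlinarith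
  obtain ⟨hp₁, hp₂⟩ : -2 ≤ p ∧ p ≤ 1 := by
    have hq₁' : (-1 : ℝ) ≤ q := by exact_mod_cast hq₁
    have hq₂' : (q : ℝ) ≤ 1 := by exact_mod_cast hq₂
    have : (-3 : ℝ) < p ∧ (p : ℝ) < 2 := by constructor <;> nlinarith
    have hlo : -3 < p := by exact_mod_cast this.1
    have hhi : p < 2 := by exact_mod_cast this.2
    omega
  simp only [Set.mem_insert_iff, Set.mem_singleton_iff]
  interval_cases p <;> interval_cases q <;> push_cast at h₁' h₂ ⊢ <;>
    first
      | (exfalso; linarith)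
      | (left; linarith)
      | (right; left; linarith)
      | (right; right; left; linarith)
      | (right; right; right; linarith)

theorem eq_one_sub_goldenRatio_of_quadForm_eq {x y : ℝ}
    (hx : x ∈ ({0, -1, 1 - φ, φ - 2} : Set ℝ))
    (hy : y ∈ ({0, -1, 1 - φ, φ - 2} : Set ℝ))
    (h : x ^ 2 + y ^ 2 + φ * x * y = 3 - φ) : x = 1 - φ ∧ y = 1 - φ := by
  obtain ⟨hφ₁, hφ₂⟩ := goldenRatio_mem_Ioo
  simp only [Set.mem_insert_iff, Set.mem_singleton_iff] at hx hy
  rcases hx with rfl | rfl | rfl | rfl <;> rcases hy with rfl | rfl | rfl | rfl <;>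
    first | exact ⟨rfl, rfl⟩ | (exfalso; nlinarith [goldenRatio_sq])

/-- Uniqueness of the affine extension of the Cartan matrix of H₂. -/
theorem affine_extension_H2_unique (a b : ℝ)
    (ha : a ∈ Ztau) (hb : b ∈ Ztau) (ha0 : a ≤ 0) (hb0 : b ≤ 0)
    (hdet : Matrix.det !![(2 : ℝ), a, b; a, 2, -tau; b, -tau, 2] = 0) :
    a = 1 - tau ∧ b = 1 - tau := by
  obtain ⟨p, q, rfl⟩ := ha
  obtain ⟨r, s, rfl⟩ := hb
  rw [tau_eq_goldenRatio] at *
  obtain ⟨hφ₁, hφ₂⟩ := goldenRatio_mem_Ioo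
  have hquad : (p + q * φ) ^ 2 + (r + s * φ) ^ 2 + φ * (p + q * φ) * (r + s * φ) = 3 - φ := by
    rw [det_extended_cartan] at hdet
    linear_combination (-1 / 2 : ℝ) * hdet - goldenRatio_sq
  have hconj := quadForm_goldenConj_eq hquad
  have hconj' :
      (r + s * ψ) ^ 2 + (p + q * ψ) ^ 2 + ψ * (r + s * ψ) * (p + q * ψ) = 3 - ψ := by
    linear_combination hconj
  have hψ : ψ ^ 2 ≤ 2 := by nlinarith [goldenConj_sq, goldenConj_neg]
  have hab := mul_nonneg_of_nonpos_of_nonpos ha0 hb0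
  refine eq_one_sub_goldenRatio_of_quadForm_eq
    (intCast_add_intCast_mul_goldenRatio_mem_of_sq_lt ?_ ha0 ?_)
    (intCast_add_intCast_mul_goldenRatio_mem_of_sq_lt ?_ hb0 ?_) hquad
  · nlinarith [sq_nonneg ((r : ℝ) + s * φ)]
  · linarith [sq_le_two_mul_of_add_mul_eq hψ hconj, one_sub_goldenRatio]
  · nlinarith [sq_nonneg ((p : ℝ) + q * φ)]
  · linarith [sq_le_two_mul_of_add_mul_eq hψ hconj', one_sub_goldenRatio]
end

section
/- (Proposition 6.9) Let ξ = exp(iπ/5) ∈ ℂ, τ = (1+√5)/2 and τ' = 1 - τ. Let n ∈ ℕ and let x ∈ ℝ satisfy x = Σ_{j=0}^{9} n_j ξ^j for some (n₀, …, n₉) ∈ ℕ¹⁰ with Σ_{j=0}^{9} n_j ≤ n. Then there exist p, q ∈ ℤ with x = p + qτ, |x| ≤ n, and |p + qτ'| ≤ n. In other words, L(n) ⊆ Σ([-n, n]) ∩ [-n, n], where Σ(Ω) = {p + qτ : p, q ∈ ℤ, p + qτ' ∈ Ω} is the one-dimensional cut-and-project quasicrystal with acceptance window Ω. -/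
set_option maxHeartbeats 1000000


noncomputable def tau' : ℝ := 1 - tau

/-- ξ = exp(iπ/5), a primitive 10th root of unity. -/
noncomputable def xi : ℂ := Complex.exp (Real.pi * Complex.I / 5)

lemma sum10 {M : Type*} [AddCommMonoid M] (f : Fin 10 → M) :
    ∑ j, f j = f 0 + f 1 + f 2 + f 3 + f 4 + f 5 + f 6 + f 7 + f 8 + f 9 := by
  simp [Fin.sum_univ_succ, ← add_assoc]

lemma xi_pow_eq (j : ℕ) : xi ^ j =
    ((Real.cos (j * Real.pi / 5) : ℝ) : ℂ) + ((Real.sin (j * Real.pi / 5) : ℝ) : ℂ) * Complex.I := by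
  rw [xi, ← Complex.exp_nat_mul]
  rw [show (j : ℂ) * (↑Real.pi * Complex.I / 5) = ((j * Real.pi / 5 : ℝ) : ℂ) * Complex.I by
    push_cast; ring]
  rw [Complex.exp_mul_I, Complex.ofReal_cos, Complex.ofReal_sin]

lemma mul_le_self_of_le_one {a u : ℝ} (ha : 0 ≤ a) (h0 : 0 ≤ u) (h1 : u ≤ 1) :
    0 ≤ a * u ∧ a * u ≤ a := ⟨mul_nonneg ha h0, by nlinarith⟩

/-- Proposition 6.9: every point of L(n) lies in ℤ[τ], is of absolute value at most n,
and its Galois conjugate is of absolute value at most n; i.e.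
L(n) ⊆ Σ([-n,n]) ∩ [-n,n] for the cut-and-project set Σ. -/
theorem L_subset_cut_and_project (n : ℕ) (x : ℝ) (m : Fin 10 → ℕ)
    (hm : (∑ j, m j) ≤ n)
    (hx : (x : ℂ) = ∑ j, (m j : ℂ) * xi ^ (j : ℕ)) :
    ∃ p q : ℤ, x = (p : ℝ) + (q : ℝ) * tau ∧ |x| ≤ (n : ℝ) ∧
      |(p : ℝ) + (q : ℝ) * tau'| ≤ (n : ℝ) := by
  set t := Real.sqrt 5 with htdef
  have ht : t ^ 2 = 5 := Real.sq_sqrt (by norm_num)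
  have ht0 : 0 ≤ t := Real.sqrt_nonneg 5
  have ht2 : 2 ≤ t := by nlinarith
  have ht3 : t ≤ 3 := by nlinarith
  have pi5pos : 0 < Real.pi / 5 := by positivity
  set s := Real.sin (Real.pi / 5) with hsdef
  have hs : 0 < s := Real.sin_pos_of_pos_of_lt_pi pi5pos (by linarith [Real.pi_pos])
  -- cosine and sine values
  have c1 : Real.cos (Real.pi / 5) = (1 + t) / 4 := Real.cos_pi_div_five
  have c2 : Real.cos (2 * Real.pi / 5) = (t - 1) / 4 := by
    have h := Real.cos_two_mul (Real.pi / 5)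
    rw [show 2 * (Real.pi / 5) = 2 * Real.pi / 5 by ring] at h
    rw [h, c1]; nlinarith
  have c3 : Real.cos (3 * Real.pi / 5) = -((t - 1) / 4) := by
    rw [show 3 * Real.pi / 5 = Real.pi - 2 * Real.pi / 5 by ring, Real.cos_pi_sub, c2]
  have c4 : Real.cos (4 * Real.pi / 5) = -((1 + t) / 4) := by
    rw [show 4 * Real.pi / 5 = Real.pi - Real.pi / 5 by ring, Real.cos_pi_sub, c1]
  have c6 : Real.cos (6 * Real.pi / 5) = -((1 + t) / 4) := by
    rw [show 6 * Real.pi / 5 = 2 * Real.pi - 4 * Real.pi / 5 by ring, Real.cos_two_pi_sub, c4]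
  have c7 : Real.cos (7 * Real.pi / 5) = -((t - 1) / 4) := by
    rw [show 7 * Real.pi / 5 = 2 * Real.pi - 3 * Real.pi / 5 by ring, Real.cos_two_pi_sub, c3]
  have c8 : Real.cos (8 * Real.pi / 5) = (t - 1) / 4 := by
    rw [show 8 * Real.pi / 5 = 2 * Real.pi - 2 * Real.pi / 5 by ring, Real.cos_two_pi_sub, c2]
  have c9 : Real.cos (9 * Real.pi / 5) = (1 + t) / 4 := by
    rw [show 9 * Real.pi / 5 = 2 * Real.pi - Real.pi / 5 by ring, Real.cos_two_pi_sub, c1]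
  have s2 : Real.sin (2 * Real.pi / 5) = 2 * s * ((1 + t) / 4) := by
    rw [show 2 * Real.pi / 5 = 2 * (Real.pi / 5) by ring, Real.sin_two_mul, c1, hsdef]
  have s3 : Real.sin (3 * Real.pi / 5) = 2 * s * ((1 + t) / 4) := by
    rw [show 3 * Real.pi / 5 = Real.pi - 2 * Real.pi / 5 by ring, Real.sin_pi_sub, s2]
  have s4 : Real.sin (4 * Real.pi / 5) = s := by
    rw [show 4 * Real.pi / 5 = Real.pi - Real.pi / 5 by ring, Real.sin_pi_sub]
  have s6 : Real.sin (6 * Real.pi / 5) = -s := by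
    rw [show 6 * Real.pi / 5 = 2 * Real.pi - 4 * Real.pi / 5 by ring, Real.sin_two_pi_sub, s4]
  have s7 : Real.sin (7 * Real.pi / 5) = -(2 * s * ((1 + t) / 4)) := by
    rw [show 7 * Real.pi / 5 = 2 * Real.pi - 3 * Real.pi / 5 by ring, Real.sin_two_pi_sub, s3]
  have s8 : Real.sin (8 * Real.pi / 5) = -(2 * s * ((1 + t) / 4)) := by
    rw [show 8 * Real.pi / 5 = 2 * Real.pi - 2 * Real.pi / 5 by ring, Real.sin_two_pi_sub, s2]
  have s9 : Real.sin (9 * Real.pi / 5) = -s := by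
    rw [show 9 * Real.pi / 5 = 2 * Real.pi - Real.pi / 5 by ring, Real.sin_two_pi_sub]
  -- real and imaginary parts of hx
  rw [sum10] at hx
  simp only [show ((0:Fin 10):ℕ) = 0 from rfl, show ((1:Fin 10):ℕ) = 1 from rfl,
    show ((2:Fin 10):ℕ) = 2 from rfl, show ((3:Fin 10):ℕ) = 3 from rfl,
    show ((4:Fin 10):ℕ) = 4 from rfl, show ((5:Fin 10):ℕ) = 5 from rfl,
    show ((6:Fin 10):ℕ) = 6 from rfl, show ((7:Fin 10):ℕ) = 7 from rfl,
    show ((8:Fin 10):ℕ) = 8 from rfl, show ((9:Fin 10):ℕ) = 9 from rfl] at hx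
  have hre := congrArg Complex.re hx
  have him := congrArg Complex.im hx
  simp only [xi_pow_eq, Complex.add_re, Complex.add_im, Complex.mul_re, Complex.mul_im,
    Complex.ofReal_re, Complex.ofReal_im, Complex.I_re, Complex.I_im, Complex.natCast_re,
    Complex.natCast_im, Fin.isValue, zero_mul, mul_zero, mul_one, sub_zero, add_zero,
    zero_add, zero_sub] at hre him
  norm_num [c1, c2, c3, c4, c6, c7, c8, c9, s2, s3, s4, s6, s7, s8, s9] at hre him
  -- integer relations from the vanishing imaginary part
  set A : ℤ := (m 1 : ℤ) + m 4 - m 6 - m 9 with hAdef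
  set B : ℤ := (m 2 : ℤ) + m 3 - m 7 - m 8 with hBdef
  have key : s * ((A : ℝ) + (B : ℝ) * ((1 + t) / 2)) = 0 := by
    push_cast [hAdef, hBdef]
    linear_combination -him
  have hAB : (A : ℝ) + (B : ℝ) * ((1 + t) / 2) = 0 := by
    rcases mul_eq_zero.mp key with h | h
    · exact absurd h hs.ne'
    · exact h
  have irr5 : Irrational t := by
    simpa using (by norm_num : Nat.Prime 5).irrational_sqrt
  have hB0 : B = 0 := by
    by_contra hB
    apply irr5
    have hBne : (B : ℝ) ≠ 0 := Int.cast_ne_zero.mpr hB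
    refine ⟨(-(2 * A + B) : ℚ) / (B : ℚ), ?_⟩
    push_cast
    field_simp
    linarith [hAB]
  have hA0 : A = 0 := by
    have : (A : ℝ) = 0 := by rw [hB0] at hAB; push_cast at hAB; linarith
    exact_mod_cast this
  have e1 : (m 1 : ℝ) + m 4 = m 6 + m 9 := by
    have : (m 1 : ℤ) + m 4 = m 6 + m 9 := by omega
    exact_mod_cast this
  have e2 : (m 2 : ℝ) + m 3 = m 7 + m 8 := by
    have : (m 2 : ℤ) + m 3 = m 7 + m 8 := by omega
    exact_mod_cast this
  refine ⟨(m 0 : ℤ) + m 3 - m 5 - m 8, (m 9 : ℤ) + m 8 - m 4 - m 3, ?_, ?_, ?_⟩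
  · show x = _ + _ * ((1 + Real.sqrt 5) / 2)
    push_cast
    rw [← htdef]
    linear_combination hre + ((1 + t) / 4) * e1 + ((t - 1) / 4) * e2
  · -- |x| ≤ n
    have hmr : (m 0 : ℝ) + m 1 + m 2 + m 3 + m 4 + m 5 + m 6 + m 7 + m 8 + m 9 ≤ n := by
      rw [sum10] at hm
      exact_mod_cast hm
    have hcl : (0:ℝ) ≤ (1 + t) / 4 := by linarith
    have hcu : (1 + t) / 4 ≤ 1 := by linarith
    have hdl : (0:ℝ) ≤ (t - 1) / 4 := by linarith
    have hdu : (t - 1) / 4 ≤ 1 := by linarith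
    have K := fun j : Fin 10 => mul_le_self_of_le_one (Nat.cast_nonneg (m j) : (0:ℝ) ≤ m j) hcl hcu
    have K' := fun j : Fin 10 => mul_le_self_of_le_one (Nat.cast_nonneg (m j) : (0:ℝ) ≤ m j) hdl hdu
    rw [abs_le]
    constructor
    · linarith [hre, hmr, (K 1).1, (K 1).2, (K 4).1, (K 4).2, (K 6).1, (K 6).2, (K 9).1, (K 9).2,
        (K' 2).1, (K' 2).2, (K' 3).1, (K' 3).2, (K' 7).1, (K' 7).2, (K' 8).1, (K' 8).2]
    · linarith [hre, hmr, (K 1).1, (K 1).2, (K 4).1, (K 4).2, (K 6).1, (K 6).2, (K 9).1, (K 9).2,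
        (K' 2).1, (K' 2).2, (K' 3).1, (K' 3).2, (K' 7).1, (K' 7).2, (K' 8).1, (K' 8).2]
  · -- conjugate bound
    have hg : ((((m 0 : ℤ) + m 3 - m 5 - m 8 : ℤ) : ℝ)) + (((m 9 : ℤ) + m 8 - m 4 - m 3 : ℤ) : ℝ) * tau'
        = (m 0 : ℝ) - m 5 + ((m 3 : ℝ) + m 7) * ((1 + t) / 4) - ((m 2 : ℝ) + m 8) * ((1 + t) / 4)
          + ((m 4 : ℝ) + m 6) * ((t - 1) / 4) - ((m 1 : ℝ) + m 9) * ((t - 1) / 4) := by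
      show _ + _ * (1 - (1 + Real.sqrt 5) / 2) = _
      push_cast
      rw [← htdef]
      linear_combination ((t - 1) / 4) * e1 + ((1 + t) / 4) * e2
    rw [hg, abs_le]
    have hmr : (m 0 : ℝ) + m 1 + m 2 + m 3 + m 4 + m 5 + m 6 + m 7 + m 8 + m 9 ≤ n := by
      rw [sum10] at hm
      exact_mod_cast hm
    have hcl : (0:ℝ) ≤ (1 + t) / 4 := by linarith
    have hcu : (1 + t) / 4 ≤ 1 := by linarith
    have hdl : (0:ℝ) ≤ (t - 1) / 4 := by linarith
    have hdu : (t - 1) / 4 ≤ 1 := by linarith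
    have K := fun j : Fin 10 => mul_le_self_of_le_one (Nat.cast_nonneg (m j) : (0:ℝ) ≤ m j) hcl hcu
    have K' := fun j : Fin 10 => mul_le_self_of_le_one (Nat.cast_nonneg (m j) : (0:ℝ) ≤ m j) hdl hdu
    constructor
    · linarith [hmr, (K 3).1, (K 3).2, (K 7).1, (K 7).2, (K 2).1, (K 2).2, (K 8).1, (K 8).2,
        (K' 4).1, (K' 4).2, (K' 6).1, (K' 6).2, (K' 1).1, (K' 1).2, (K' 9).1, (K' 9).2]
    · linarith [hmr, (K 3).1, (K 3).2, (K 7).1, (K 7).2, (K 2).1, (K 2).2, (K 8).1, (K 8).2,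
        (K' 4).1, (K' 4).2, (K' 6).1, (K' 6).2, (K' 1).1, (K' 1).2, (K' 9).1, (K' 9).2]
end
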